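/- arXiv:2005.01342 — 2 statements merged into one kernel-verified Lean document; each statement's English description precedes it below -/
import Mathlib

section
/- For every total streaming string transducer there exists a simple streaming string transducer computing the same function. -/
set_option autoImplicit false

/-! ### Asymptotic growth of functions `A* → ℕ` -/

/-- `g` has `k`-polynomial growth: `g(w) = O(|w|^k)` and there is an infinite set `L`
of words on which `g(w) = Ω(|w|^k)`. -/
def PolyGrowth {A : Type} (g : List A → ℕ) (k : ℕ) : Prop :=
  (∃ C : ℕ, ∀ w, g w ≤ C * w.length ^ k + C) ∧
  (∃ L : Set (List A), L.Infinite ∧ ∃ c : ℕ, 0 < c ∧ ∀ w ∈ L, w.length ^ k ≤ c * g w)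

/-- `g` has exponential growth: `g(w) = 2^{O(|w|)}` and there is an infinite set `L`
of words on which `g(w) = 2^{Ω(|w|)}`. -/
def ExpGrowth {A : Type} (g : List A → ℕ) : Prop :=
  (∃ C : ℕ, ∀ w, g w ≤ 2 ^ (C * w.length + C)) ∧
  (∃ L : Set (List A), L.Infinite ∧ ∃ c : ℕ, 0 < c ∧ ∀ w ∈ L, 2 ^ w.length ≤ (g w) ^ c)

/-! ### Substitutions -/

/-- Extension of a substitution `s : X → (B ⊎ X)*` to a morphism on `(B ⊎ X)*`
fixing the letters of `B`; this also gives the composition of substitutions,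
`(s₁ ∘ s₂) x = applySubst s₁ (s₂ x)`. -/
def applySubst {B X : Type} (s : X → List (B ⊕ X)) (l : List (B ⊕ X)) : List (B ⊕ X) :=
  l.flatMap (fun c => match c with | Sum.inl b => [Sum.inl b] | Sum.inr x => s x)

/-- Evaluation of a word over `B ⊎ X` under a valuation `v : X → B*` of the registers. -/
def evalSubst {B X : Type} (v : X → List B) (l : List (B ⊕ X)) : List B :=
  l.flatMap (fun c => match c with | Sum.inl b => [b] | Sum.inr x => v x)

/-- Number of occurrences of register `x` in a word over `B ⊎ X`. -/
noncomputable def occCount {B X : Type} (x : X) (l : List (B ⊕ X)) : ℕ :=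
  l.countP (fun c => @decide (c = Sum.inr x) (Classical.propDecidable _))

/-- Total number of occurrences of register `x` in the whole set of words `{s y | y ∈ X}`. -/
noncomputable def totalOcc {B X : Type} [Fintype X] (s : X → List (B ⊕ X)) (x : X) : ℕ :=
  ∑ y : X, occCount x (s y)

/-! ### Streaming string transducers -/

/-- A streaming string transducer (SST) with input alphabet `A` and output alphabet `B`:
finitely many states `Q` with initial state `q0`, finitely many registers `X` with
initial contents `init`, a partial transition/update function (`trans`, returning the
successor state together with the register update substitution, with a common domain),
and a partial output function `out`. -/
structure SST (A B : Type) where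
  Q : Type
  X : Type
  [finQ : Fintype Q]
  [finX : Fintype X]
  q0 : Q
  init : X → List B
  trans : Q → A → Option (Q × (X → List (B ⊕ X)))
  out : Q → Option (List (B ⊕ X))

attribute [instance] SST.finQ SST.finX

/-- Run of an SST from state `q` with current register valuation `v`. -/
def SST.runFrom {A B : Type} (T : SST A B) :
    T.Q → (T.X → List B) → List A → Option (T.Q × (T.X → List B))
  | q, v, [] => some (q, v)
  | q, v, a :: w =>
    match T.trans q a with
    | none => none
    | some (q', s) => T.runFrom q' (fun x => evalSubst v (s x)) w

/-- The (partial) function computed by an SST. -/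
def SST.eval {A B : Type} (T : SST A B) (w : List A) : Option (List B) :=
  (T.runFrom T.q0 T.init w).bind fun p => (T.out p.1).map fun o => evalSubst p.2 o

def SST.Computes {A B : Type} (T : SST A B) (f : List A → Option (List B)) : Prop :=
  ∀ w, T.eval w = f w

/-- An SST is copyless if every update substitution uses each register at most once
in total. -/
def SST.Copyless {A B : Type} (T : SST A B) : Prop :=
  ∀ q a p, T.trans q a = some p → ∀ x : T.X, totalOcc p.2 x ≤ 1

/-- An SST is `k`-layered if its registers can be partitioned into layers
`X_0, …, X_k` such that every update of a register of layer `i` only uses registers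
of layers `≤ i`, and each register of layer `i` is used at most once in total in the
updates of the registers of layer `i`. -/
def SST.IsLayered {A B : Type} (T : SST A B) (k : ℕ) : Prop :=
  ∃ layer : T.X → Fin (k + 1),
    ∀ q a p, T.trans q a = some p →
      (∀ x y, Sum.inr y ∈ p.2 x → layer y ≤ layer x) ∧
      (∀ y : T.X,
        (∑ x ∈ Finset.univ.filter (fun x => layer x = layer y), occCount y (p.2 x)) ≤ 1)

/-- The composed substitution `λ(q, w)` applied along the run reading `w` from state `q`
(together with the state reached). -/
def SST.substFrom {A B : Type} (T : SST A B) :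
    T.Q → List A → Option (T.Q × (T.X → List (B ⊕ T.X)))
  | q, [] => some (q, fun x => [Sum.inr x])
  | q, a :: w =>
    match T.trans q a with
    | none => none
    | some (q', s) => (T.substFrom q' w).map fun p => (p.1, fun x => applySubst s (p.2 x))

/-- An SST is `(k,B)`-bounded if its registers can be partitioned into layers
`X_0, …, X_k` such that every update of a register of layer `i` only uses registers of
layers `≤ i`, and for every state `q` and word `w`, each register of layer `i` occurs
at most `B` times in total in `{λ(q,w)(x) | x ∈ X_i}`. -/
def SST.IsBounded {A B : Type} (T : SST A B) (k Bd : ℕ) : Prop :=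
  ∃ layer : T.X → Fin (k + 1),
    (∀ q a p, T.trans q a = some p → ∀ x y, Sum.inr y ∈ p.2 x → layer y ≤ layer x) ∧
    (∀ q w p, T.substFrom q w = some p →
      ∀ y : T.X,
        (∑ x ∈ Finset.univ.filter (fun x => layer x = layer y), occCount y (p.2 x)) ≤ Bd)

/-! ### Simple SSTs -/

/-- A simple SST: total, a single state (hence no state component), and update
substitutions and output using no letters of `B`. -/
structure SimpleSST (A B : Type) where
  X : Type
  [finX : Fintype X]
  [decX : DecidableEq X]
  init : X → List B
  upd : A → X → List X
  out : List X

attribute [instance] SimpleSST.finX SimpleSST.decX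

/-- Register valuation of a simple SST after reading a word, starting from valuation `v`. -/
def SimpleSST.valFrom {A B : Type} (T : SimpleSST A B) :
    (T.X → List B) → List A → T.X → List B
  | v, [] => v
  | v, a :: w => T.valFrom (fun x => (T.upd a x).flatMap v) w

/-- Register valuation `𝒯^w` of a simple SST after reading `w`. -/
def SimpleSST.val {A B : Type} (T : SimpleSST A B) (w : List A) : T.X → List B :=
  T.valFrom T.init w

/-- The (total) function computed by a simple SST. -/
def SimpleSST.eval {A B : Type} (T : SimpleSST A B) (w : List A) : List B :=
  (T.out).flatMap (T.val w)

/-! ### Two-way transducers -/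

/-- A tape symbol: a letter of `A` or one of the two endmarkers `⊢`, `⊣`. -/
inductive TapeSym (A : Type) where
  | lend
  | rend
  | letter (a : A)

/-- The content of the tape `⊢w⊣` at position `m ∈ {0, …, |w|+1}`. -/
def tapeAt {A : Type} (w : List A) (m : ℕ) : TapeSym A :=
  if m = 0 then TapeSym.lend
  else
    match w[m - 1]? with
    | some a => TapeSym.letter a
    | none => TapeSym.rend

/-- Head moves. -/
inductive Dir where
  | left
  | right

/-- A deterministic two-way transducer: finitely many states with an initial state and
a set of final states, and a partial transition/output function (common domain). -/
structure TwoWayT (A B : Type) where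
  Q : Type
  [finQ : Fintype Q]
  q0 : Q
  final : Set Q
  trans : Q → TapeSym A → Option ((Q × Dir) × List B)

attribute [instance] TwoWayT.finQ

/-- `TwoWayT.Steps T w c v c'`: on input `⊢w⊣` the transducer can go from
configuration `c` to configuration `c'` producing output `v`. -/
inductive TwoWayT.Steps {A B : Type} (T : TwoWayT A B) (w : List A) :
    T.Q × ℕ → List B → T.Q × ℕ → Prop
  | refl (c : T.Q × ℕ) : TwoWayT.Steps T w c [] c
  | stepL {q : T.Q} {m : ℕ} {q' : T.Q} {v u : List B} {cf : T.Q × ℕ} :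
      T.trans q (tapeAt w m) = some ((q', Dir.left), v) → 1 ≤ m →
      TwoWayT.Steps T w (q', m - 1) u cf → TwoWayT.Steps T w (q, m) (v ++ u) cf
  | stepR {q : T.Q} {m : ℕ} {q' : T.Q} {v u : List B} {cf : T.Q × ℕ} :
      T.trans q (tapeAt w m) = some ((q', Dir.right), v) → m ≤ w.length →
      TwoWayT.Steps T w (q', m + 1) u cf → TwoWayT.Steps T w (q, m) (v ++ u) cf

/-- The two-way transducer computes the partial function `f`: `f w = some v` iff there
is an accepting run on `⊢w⊣` (from `(q0, 0)` to `(q, |w|+1)` with `q` final)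
producing `v`. -/
def TwoWayT.Computes {A B : Type} (T : TwoWayT A B) (f : List A → Option (List B)) : Prop :=
  ∀ w v, f w = some v ↔ ∃ q ∈ T.final, TwoWayT.Steps T w (T.q0, 0) v (q, w.length + 1)

/-! ### Marble transducers -/

/-- Actions of a marble transducer: move left, move right, lift the marble, or drop a
marble of color `c`. -/
inductive MAct (C : Type) where
  | left
  | right
  | lift
  | drop (c : C)

/-- A deterministic marble transducer: finitely many states with an initial state and a
set of final states, finitely many marble colors `C`, and a partial transition/output
function (common domain) reading the current state, the tape symbol, and the color of
the marble at the current position (if any); on a position carrying a marble the head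
may only move left or lift the marble. -/
structure MarbleT (A B : Type) where
  Q : Type
  C : Type
  [finQ : Fintype Q]
  [finC : Fintype C]
  q0 : Q
  final : Set Q
  trans : Q → TapeSym A → Option C → Option ((Q × MAct C) × List B)
  marble_left_or_lift : ∀ q s c p, trans q s (some c) = some p →
    p.1.2 = MAct.left ∨ p.1.2 = MAct.lift

attribute [instance] MarbleT.finQ MarbleT.finC

/-- The color of the marble at position `m`, for a stack `π` of dropped marbles
(topmost first, positions strictly increasing from the top and all ≥ the head
position). -/
def marbleAt {C : Type} (m : ℕ) : List (C × ℕ) → Option C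
  | [] => none
  | (c, p) :: _ => if p = m then some c else none

/-- `MarbleT.Steps T w c v c'`: on input `⊢w⊣` the marble transducer can go from
configuration `c` to configuration `c'` producing output `v`. A configuration is a
triple (state, head position, stack of dropped marbles). -/
inductive MarbleT.Steps {A B : Type} (T : MarbleT A B) (w : List A) :
    T.Q × ℕ × List (T.C × ℕ) → List B → T.Q × ℕ × List (T.C × ℕ) → Prop
  | refl (c : T.Q × ℕ × List (T.C × ℕ)) : MarbleT.Steps T w c [] c
  | stepL {q : T.Q} {m : ℕ} {π : List (T.C × ℕ)} {q' : T.Q} {v u : List B}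
      {cf : T.Q × ℕ × List (T.C × ℕ)} :
      T.trans q (tapeAt w m) (marbleAt m π) = some ((q', MAct.left), v) → 1 ≤ m →
      MarbleT.Steps T w (q', m - 1, π) u cf → MarbleT.Steps T w (q, m, π) (v ++ u) cf
  | stepR {q : T.Q} {m : ℕ} {π : List (T.C × ℕ)} {q' : T.Q} {v u : List B}
      {cf : T.Q × ℕ × List (T.C × ℕ)} :
      marbleAt m π = none →
      T.trans q (tapeAt w m) none = some ((q', MAct.right), v) → m ≤ w.length →
      MarbleT.Steps T w (q', m + 1, π) u cf → MarbleT.Steps T w (q, m, π) (v ++ u) cf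
  | stepLift {q : T.Q} {m : ℕ} {π : List (T.C × ℕ)} {q' : T.Q} {cc : T.C} {v u : List B}
      {cf : T.Q × ℕ × List (T.C × ℕ)} :
      T.trans q (tapeAt w m) (some cc) = some ((q', MAct.lift), v) →
      MarbleT.Steps T w (q', m, π) u cf →
      MarbleT.Steps T w (q, m, (cc, m) :: π) (v ++ u) cf
  | stepDrop {q : T.Q} {m : ℕ} {π : List (T.C × ℕ)} {q' : T.Q} {cc : T.C} {v u : List B}
      {cf : T.Q × ℕ × List (T.C × ℕ)} :
      marbleAt m π = none →
      T.trans q (tapeAt w m) none = some ((q', MAct.drop cc), v) →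
      MarbleT.Steps T w (q', m, (cc, m) :: π) u cf →
      MarbleT.Steps T w (q, m, π) (v ++ u) cf

/-- The marble transducer computes the partial function `f`: `f w = some v` iff there is
an accepting run on `⊢w⊣` (from `(q0, 0, ε)` to `(q, |w|+1, ε)` with `q` final)
producing `v`. -/
def MarbleT.Computes {A B : Type} (T : MarbleT A B) (f : List A → Option (List B)) : Prop :=
  ∀ w v, f w = some v ↔
    ∃ q ∈ T.final, MarbleT.Steps T w (T.q0, 0, []) v (q, w.length + 1, [])

/-- A `k`-marble transducer: every configuration reachable from the initial
configuration carries at most `k` marbles. -/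
def MarbleT.IsKMarble {A B : Type} (T : MarbleT A B) (k : ℕ) : Prop :=
  ∀ (w : List A) (u : List B) (cfg : T.Q × ℕ × List (T.C × ℕ)),
    MarbleT.Steps T w (T.q0, 0, []) u cfg → cfg.2.2.length ≤ k

/-- `f` is computable by a `k`-marble transducer. -/
def ComputableKMarble {A B : Type} (f : List A → List B) (k : ℕ) : Prop :=
  ∃ T : MarbleT A B, T.IsKMarble k ∧ T.Computes (fun w => some (f w))

/-! ### Matrices over ℕ and ℕ-automata -/

/-- Product of two square matrices over `ℕ` (given as functions). -/
def matMul {Q : Type} [Fintype Q] (M N : Q → Q → ℕ) : Q → Q → ℕ :=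
  fun i j => ∑ x : Q, M i x * N x j

/-- Identity matrix over `ℕ`. -/
def matId {Q : Type} [DecidableEq Q] : Q → Q → ℕ :=
  fun i j => if i = j then 1 else 0

/-- Row vector times matrix. -/
def vecMat {Q : Type} [Fintype Q] (v : Q → ℕ) (M : Q → Q → ℕ) : Q → ℕ :=
  fun j => ∑ x : Q, v x * M x j

/-- Matrix times column vector. -/
def matVec {Q : Type} [Fintype Q] (M : Q → Q → ℕ) (v : Q → ℕ) : Q → ℕ :=
  fun i => ∑ x : Q, M i x * v x

/-- Dot product of two vectors over `ℕ`. -/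
def dotProd {Q : Type} [Fintype Q] (v w : Q → ℕ) : ℕ :=
  ∑ x : Q, v x * w x

/-- An `ℕ`-automaton: a finite set of states `Q`, an initial row vector `α`, a weight
matrix `μ a` for every letter `a` (extended to words as a monoid morphism `μW`), and a
final column vector `β`. -/
structure NAut (A : Type) where
  Q : Type
  [finQ : Fintype Q]
  [decQ : DecidableEq Q]
  α : Q → ℕ
  μ : A → Q → Q → ℕ
  β : Q → ℕ

attribute [instance] NAut.finQ NAut.decQ

/-- The monoid morphism `A* → ℕ^{Q×Q}` extending `μ`. -/
def NAut.μW {A : Type} (T : NAut A) : List A → T.Q → T.Q → ℕ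
  | [] => matId
  | a :: w => matMul (T.μ a) (T.μW w)

/-- The total function `g : A* → ℕ` computed by the `ℕ`-automaton: `g w = α·μ(w)·β`. -/
def NAut.g {A : Type} (T : NAut A) (w : List A) : ℕ :=
  dotProd (vecMat T.α (T.μW w)) T.β

/-- Trimness: every state is accessible and co-accessible with nonzero weight. -/
def NAut.Trim {A : Type} (T : NAut A) : Prop :=
  ∀ q : T.Q, (∃ u, 1 ≤ vecMat T.α (T.μW u) q) ∧ (∃ v, 1 ≤ matVec (T.μW v) T.β q)

/-- A heavy cycle on state `q`: a nonempty word `v` with `μ(v)(q,q) ≥ 2`. -/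
def NAut.HeavyCycle {A : Type} (T : NAut A) (q : T.Q) (v : List A) : Prop :=
  v ≠ [] ∧ 2 ≤ T.μW v q q

/-- A barbell from `q` to `q' ≠ q`: a nonempty word `v` with `μ(v)(q,q) ≥ 1`,
`μ(v)(q,q') ≥ 1` and `μ(v)(q',q') ≥ 1`. -/
def NAut.Barbell {A : Type} (T : NAut A) (q q' : T.Q) (v : List A) : Prop :=
  q ≠ q' ∧ v ≠ [] ∧ 1 ≤ T.μW v q q ∧ 1 ≤ T.μW v q q' ∧ 1 ≤ T.μW v q' q'

/-- Edge of the barbell graph `𝔊`. -/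
def NAut.GEdge {A : Type} (T : NAut A) (q1 q2 : T.Q) : Prop :=
  ∃ q q' v, T.Barbell q q' v ∧ (∃ w, 1 ≤ T.μW w q1 q) ∧ (∃ w', 1 ≤ T.μW w' q' q2)

/-- `PathLen G q n`: there is a directed path of length `n` (counting edges) in the
graph `G` ending in `q`. -/
inductive PathLen {Q : Type} (G : Q → Q → Prop) : Q → ℕ → Prop
  | zero (q : Q) : PathLen G q 0
  | succ {p q : Q} {n : ℕ} : PathLen G p n → G p q → PathLen G q (n + 1)

/-- The height of `q` in the graph `G` is `n`: the maximal length of a directed path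
ending in `q` is `n`. -/
def HeightIs {Q : Type} (G : Q → Q → Prop) (q : Q) (n : ℕ) : Prop :=
  PathLen G q n ∧ ∀ m, PathLen G q m → m ≤ n

/-! ### Statement-specific predicates -/

/-- Case (1) of the trichotomy: `|f|` has exponential growth and `f` is not computable
with `k` marbles for any `k`. -/
def MarbleCase1 {A B : Type} (f : List A → List B) : Prop :=
  ExpGrowth (fun w => (f w).length) ∧ ∀ k : ℕ, ¬ ComputableKMarble f k

/-- Case (2) of the trichotomy: `|f|` has `(k+1)`-polynomial growth for some `k`, `f` is
computable with `k` marbles, and `k` is the least possible number of marbles. -/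
def MarbleCase2 {A B : Type} (f : List A → List B) : Prop :=
  ∃ k : ℕ, PolyGrowth (fun w => (f w).length) (k + 1) ∧ ComputableKMarble f k ∧
    ∀ j : ℕ, ComputableKMarble f j → k ≤ j

/-- Case (3) of the trichotomy: `|f|` has `0`-polynomial growth and `f` is computable
with `0` marbles. -/
def MarbleCase3 {A B : Type} (f : List A → List B) : Prop :=
  PolyGrowth (fun w => (f w).length) 0 ∧ ComputableKMarble f 0

/-- The second alternative of Lemma `lem:graph`: `g` has `k`-polynomial growth for some
`k ≥ 0` and the states admit a partition `S_0, …, S_k` satisfying (a), (b), (c). -/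
def NAutPolyCase {A : Type} (T : NAut A) : Prop :=
  ∃ k : ℕ, PolyGrowth T.g k ∧
    ∃ S : T.Q → Fin (k + 1),
      (∀ q q' : T.Q, (∃ w, 1 ≤ T.μW w q q') → S q ≤ S q') ∧
      (∃ Bd : ℕ, ∀ q q' : T.Q, S q = S q' → ∀ w, T.μW w q q' ≤ Bd) ∧
      (∀ q : T.Q, ∃ C : ℕ, ∀ w, vecMat T.α (T.μW w) q ≤ C * w.length ^ (S q : ℕ) + C)


/-! The simple SST keeps, for every state `p` of `T`, a copy `(p, inr x)` of every register
`x` and a register `(p, inl b)` holding the letter `b`; all copies tagged with a state other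
than the current one hold `ε`. An update or output then concatenates the contributions of
all possible source states, and only the current one is nonempty, so no state needs to be
remembered. -/

theorem List.flatMap_eq_of_forall_ne_eq_nil {α β : Type*} {l : List α} {f : α → List β}
    {a : α} (hl : l.Nodup) (ha : a ∈ l) (hf : ∀ b ∈ l, b ≠ a → f b = []) :
    l.flatMap f = f a := by
  induction l with
  | nil => cases ha
  | cons b l ih =>
    obtain ⟨hbl, hl⟩ := List.nodup_cons.mp hl
    rw [List.flatMap_cons]
    rcases List.mem_cons.mp ha with rfl | ha
    · rw [List.flatMap_eq_nil_iff.mpr fun c hc => hf c (.tail _ hc) (ne_of_mem_of_not_mem hc hbl),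
        List.append_nil]
    · rw [hf b List.mem_cons_self fun h => hbl (h ▸ ha), ih hl ha fun c hc => hf c (.tail _ hc),
        List.nil_append]

theorem evalSubst_applySubst {B X : Type} (v : X → List B) (s : X → List (B ⊕ X))
    (l : List (B ⊕ X)) :
    evalSubst v (applySubst s l) = evalSubst (fun x => evalSubst v (s x)) l := by
  simp only [evalSubst, applySubst, List.flatMap_assoc]
  congr 1
  funext c
  cases c <;> simp

namespace SST

variable {A B : Type} {T : SST A B}

theorem runFrom_isSome (htrans : ∀ q a, (T.trans q a).isSome) (q : T.Q) (v : T.X → List B)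
    (w : List A) : (T.runFrom q v w).isSome := by
  induction w generalizing q v with
  | nil => rfl
  | cons a w ih =>
    obtain ⟨⟨q', s⟩, h⟩ := Option.isSome_iff_exists.mp (htrans q a)
    simp only [runFrom, h]
    exact ih _ _

open Classical in
noncomputable def encodeVal (q : T.Q) (v : T.X → List B) : T.Q × (B ⊕ T.X) → List B :=
  fun r => if r.1 = q then evalSubst v [r.2] else []

noncomputable def tagged (g : T.Q → List (B ⊕ T.X)) : List (T.Q × (B ⊕ T.X)) :=
  Finset.univ.toList.flatMap fun p => (g p).map (p, ·)

theorem tagged_flatMap_encodeVal (g : T.Q → List (B ⊕ T.X)) (q : T.Q) (v : T.X → List B) :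
    (tagged g).flatMap (encodeVal q v) = evalSubst v (g q) := by
  have hother (p : T.Q) (hp : p ≠ q) (l : List (B ⊕ T.X)) :
      (l.map (p, ·)).flatMap (encodeVal q v) = [] := by
    rw [List.flatMap_map]
    exact List.flatMap_eq_nil_iff.mpr fun _ _ => if_neg hp
  rw [tagged, List.flatMap_assoc, List.flatMap_eq_of_forall_ne_eq_nil (Finset.nodup_toList _)
    (Finset.mem_toList.mpr (Finset.mem_univ q)) fun p _ hp => hother p hp _,
    List.flatMap_map, evalSubst]
  congr 1
  funext c
  cases c <;> simp [encodeVal, evalSubst]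

open Classical in
noncomputable def toSimple [Fintype B] (T : SST A B) : SimpleSST A B where
  X := T.Q × (B ⊕ T.X)
  init := encodeVal T.q0 T.init
  upd a r := tagged fun q =>
    match T.trans q a with
    | some (q', s) => if r.1 = q' then applySubst s [r.2] else []
    | none => []
  out := tagged fun q => (T.out q).getD []

theorem toSimple_upd_flatMap_encodeVal [Fintype B] {q q' : T.Q} {a : A}
    {s : T.X → List (B ⊕ T.X)} (h : T.trans q a = some (q', s)) (v : T.X → List B) :
    (fun r => (T.toSimple.upd a r).flatMap (encodeVal q v)) =
      encodeVal q' fun x => evalSubst v (s x) := by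
  funext ⟨p, c⟩
  simp only [toSimple, tagged_flatMap_encodeVal, h, encodeVal]
  split_ifs
  · exact evalSubst_applySubst v s [c]
  · rfl

theorem toSimple_valFrom_encodeVal [Fintype B] {q q' : T.Q} {v v' : T.X → List B}
    {w : List A} (h : T.runFrom q v w = some (q', v')) :
    T.toSimple.valFrom (encodeVal q v) w = encodeVal q' v' := by
  induction w generalizing q v with
  | nil =>
    cases h
    rfl
  | cons a w ih =>
    rcases ht : T.trans q a with _ | ⟨q₁, s⟩ <;> simp only [runFrom, ht, reduceCtorEq] at h
    change T.toSimple.valFrom (fun r => (T.toSimple.upd a r).flatMap (encodeVal q v)) w = _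
    rw [toSimple_upd_flatMap_encodeVal ht]
    exact ih h

end SST

theorem stmt5_general {A B : Type} [Fintype B] (T : SST A B)
    (htrans : ∀ q a, (T.trans q a).isSome) (hout : ∀ q, (T.out q).isSome) :
    ∃ S : SimpleSST A B, ∀ w, T.eval w = some (S.eval w) := by
  refine ⟨T.toSimple, fun w => ?_⟩
  obtain ⟨⟨q, v⟩, hrun⟩ := Option.isSome_iff_exists.mp (SST.runFrom_isSome htrans T.q0 T.init w)
  obtain ⟨o, ho⟩ := Option.isSome_iff_exists.mp (hout q)
  have hval : T.toSimple.val w = SST.encodeVal q v := SST.toSimple_valFrom_encodeVal hrun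
  simp only [SST.eval, hrun, ho, Option.bind_some, Option.map_some, SimpleSST.eval, hval]
  simp only [SST.toSimple, SST.tagged_flatMap_encodeVal, ho, Option.getD_some]

theorem stmt5 {A B : Type} [Fintype A] [Fintype B] (T : SST A B)
    (htrans : ∀ q a, (T.trans q a).isSome) (hout : ∀ q, (T.out q).isSome) :
    ∃ S : SimpleSST A B, ∀ w, T.eval w = some (S.eval w) :=
  stmt5_general T htrans hout
end

section
/- Let 𝒜 be a trim ℕ-automaton computing g : A* → ℕ. Then g is bounded (i.e. g(w) = O(1)) if and only if 𝒜 contains neither a heavy cycle on some state nor a barbell from some state q to some state q' ≠ q. -/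
set_option autoImplicit false

/-!
If `g` is bounded then so is every entry of `μ(w)`, since by trimness each entry is dominated by a
value of `g`; but pumping a heavy cycle makes an entry grow like `2ⁿ`, and pumping a barbell makes
one grow like `n`.

Conversely, without heavy cycles an entry `μ(w)(p,q)` between states of one strongly connected
component is at most `1`. For `p`, `q` in different components, cutting every run at the position
where it leaves the component of `p` bounds `μ(w)(p,q)` by the number of such exit positions times
a bound on the entries out of states that are reachable from `p` but cannot return to it; the
latter holds by induction on the number of states reachable from `p`. The number of exit positions
is bounded by Ramsey's theorem for pairs: among many of them there are four whose runs cross in a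
pattern that spells out a barbell.
-/

section Matrices

variable {Q : Type} [Fintype Q]

lemma matId_matMul [DecidableEq Q] (M : Q → Q → ℕ) : matMul matId M = M := by
  funext i j
  simp [matMul, matId, ite_mul, Finset.sum_ite_eq]

lemma matMul_assoc (M N P : Q → Q → ℕ) :
    matMul (matMul M N) P = matMul M (matMul N P) := by
  funext i j
  simp only [matMul, Finset.sum_mul, Finset.mul_sum, mul_assoc]
  exact Finset.sum_comm

lemma mul_le_matMul (M N : Q → Q → ℕ) (i x j : Q) : M i x * N x j ≤ matMul M N i j :=
  Finset.single_le_sum (f := fun y => M i y * N y j) (fun _ _ => Nat.zero_le _)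
    (Finset.mem_univ x)

lemma add_mul_le_matMul [DecidableEq Q] {x y : Q} (hxy : x ≠ y) (M N : Q → Q → ℕ) (i j : Q) :
    M i x * N x j + M i y * N y j ≤ matMul M N i j :=
  (Finset.sum_pair (f := fun z => M i z * N z j) hxy).symm.trans_le
    (Finset.sum_le_sum_of_subset (Finset.subset_univ _))

end Matrices

lemma Nat.le_add_sum_range_of_le_succ_add {f g : ℕ → ℕ} {n : ℕ}
    (h : ∀ j < n, f j ≤ f (j + 1) + g j) : f 0 ≤ f n + ∑ j ∈ Finset.range n, g j := by
  induction n with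
  | zero => simp
  | succ n ih =>
    rw [Finset.sum_range_succ]
    have := h n (Nat.lt_succ_self n)
    have := ih fun j hj => h j (Nat.lt_succ_of_lt hj)
    omega

section Ramsey

open Finset

variable {α K : Type} [LinearOrder α] [Fintype K] [DecidableEq K]

lemma exists_subset_preHomogeneous (col : α → α → K) (t : ℕ) (S : Finset α)
    (hS : (Fintype.card K + 1) ^ t ≤ #S) :
    ∃ P ⊆ S, #P = t ∧
      ∀ x ∈ P, ∀ y ∈ P, ∀ z ∈ P, x < y → x < z → col x y = col x z := by
  induction t generalizing S with
  | zero => exact ⟨∅, empty_subset S, rfl, by simp⟩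
  | succ t ih =>
    have hne : S.Nonempty := card_pos.mp (lt_of_lt_of_le (by positivity) hS)
    set a := S.min' hne
    have : Nonempty K := ⟨col a a⟩
    have hrest : #(univ : Finset K) * (Fintype.card K + 1) ^ t ≤ #(S.erase a) := by
      rw [card_erase_of_mem (S.min'_mem hne), card_univ]
      have : 0 < (Fintype.card K + 1) ^ t := by positivity
      rw [pow_succ', add_mul, one_mul] at hS
      omega
    obtain ⟨κ, -, hκ⟩ := exists_le_card_fiber_of_mul_le_card_of_maps_to
      (f := col a) (fun _ _ => mem_univ _) univ_nonempty hrest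
    obtain ⟨P, hPsub, hPcard, hP⟩ := ih _ hκ
    have hP_gt : ∀ x ∈ P, a < x ∧ col a x = κ ∧ x ∈ S := by
      intro x hx
      obtain ⟨hx, hxκ⟩ := mem_filter.mp (hPsub hx)
      obtain ⟨hxa, hxS⟩ := mem_erase.mp hx
      exact ⟨lt_of_le_of_ne (S.min'_le x hxS) (Ne.symm hxa), hxκ, hxS⟩
    have haP : a ∉ P := fun h => lt_irrefl a (hP_gt a h).1
    refine ⟨insert a P, insert_subset (S.min'_mem hne) fun x hx => (hP_gt x hx).2.2,
      by rw [card_insert_of_notMem haP, hPcard], ?_⟩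
    have hmem_of_gt : ∀ x ∈ insert a P, ∀ y ∈ insert a P, x < y → y ∈ P := by
      intro x hx y hy hxy
      rcases mem_insert.mp hy with rfl | hy
      · rcases mem_insert.mp hx with rfl | hx
        · exact absurd hxy (lt_irrefl _)
        · exact absurd hxy (hP_gt x hx).1.not_gt
      · exact hy
    intro x hx y hy z hz hxy hxz
    have hyP := hmem_of_gt x hx y hy hxy
    have hzP := hmem_of_gt x hx z hz hxz
    rcases mem_insert.mp hx with rfl | hx
    · rw [(hP_gt y hyP).2.1, (hP_gt z hzP).2.1]
    · exact hP x hx y hyP z hzP hxy hxz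

lemma exists_subset_monochromatic (col : α → α → K) (n : ℕ) (S : Finset α)
    (hS : (Fintype.card K + 1) ^ (n * Fintype.card K + 1) ≤ #S) :
    ∃ M ⊆ S, #M = n + 1 ∧ ∃ κ, ∀ x ∈ M, ∀ y ∈ M, x < y → col x y = κ := by
  obtain ⟨P, hPS, hPcard, hP⟩ := exists_subset_preHomogeneous col _ S hS
  have hne : P.Nonempty := card_pos.mp (by omega)
  set m := P.max' hne
  have : Nonempty K := ⟨col m m⟩
  obtain ⟨κ, -, hκ⟩ := exists_le_card_fiber_of_mul_le_card_of_maps_to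
    (s := P.erase m) (f := fun x => col x m) (n := n) (fun _ _ => mem_univ _) univ_nonempty
    (by rw [card_erase_of_mem (P.max'_mem hne), hPcard, card_univ, mul_comm]; omega)
  obtain ⟨F, hF, hFcard⟩ := exists_subset_card_eq hκ
  have hF' : ∀ x ∈ F, x ∈ P ∧ x ≠ m ∧ col x m = κ := by
    intro x hx
    obtain ⟨hx, hxκ⟩ := mem_filter.mp (hF hx)
    exact ⟨mem_of_mem_erase hx, ne_of_mem_erase hx, hxκ⟩
  have hmF : m ∉ F := fun h => (hF' m h).2.1 rfl
  refine ⟨insert m F, insert_subset (hPS (P.max'_mem hne)) fun x hx => hPS (hF' x hx).1,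
    by rw [card_insert_of_notMem hmF, hFcard], κ, ?_⟩
  intro x hx y hy hxy
  have hyP : y ∈ P := by
    rcases mem_insert.mp hy with rfl | hy
    exacts [P.max'_mem hne, (hF' y hy).1]
  have hxF : x ∈ F := by
    refine (mem_insert.mp hx).resolve_left fun hxm => ?_
    rw [hxm] at hxy
    exact (P.le_max' y hyP).not_gt hxy
  obtain ⟨hxP, hxm, hxκ⟩ := hF' x hxF
  rw [hP x hxP y hyP m (P.max'_mem hne) hxy
    (lt_of_le_of_ne (P.le_max' x hxP) hxm), hxκ]

end Ramsey

namespace NAut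

variable {A : Type} (T : NAut A)

@[simp] lemma μW_nil : T.μW [] = matId := rfl

lemma μW_cons (a : A) (w : List A) : T.μW (a :: w) = matMul (T.μ a) (T.μW w) := rfl

lemma μW_singleton (a : A) (p q : T.Q) : T.μW [a] p q = T.μ a p q := by
  simp [μW_cons, matMul, matId]

lemma μW_append (u v : List A) : T.μW (u ++ v) = matMul (T.μW u) (T.μW v) := by
  induction u with
  | nil => simp [matId_matMul]
  | cons a u ih => simp [μW_cons, ih, matMul_assoc]

lemma mul_le_μW_append (u v : List A) (p q r : T.Q) :
    T.μW u p q * T.μW v q r ≤ T.μW (u ++ v) p r := by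
  rw [μW_append]
  exact mul_le_matMul _ _ _ _ _

def Reach (p q : T.Q) : Prop := ∃ w, 1 ≤ T.μW w p q

def SameSCC (p q : T.Q) : Prop := T.Reach p q ∧ T.Reach q p

lemma reach_refl (p : T.Q) : T.Reach p p := ⟨[], by simp [matId]⟩

lemma sameSCC_refl (p : T.Q) : T.SameSCC p p := ⟨T.reach_refl p, T.reach_refl p⟩

/-- A run of positive weight over `w`, encoded by its state sequence; only the values of `f` up
to `w.length` matter. -/
def IsRun (w : List A) (f : ℕ → T.Q) : Prop :=
  ∀ i (h : i < w.length), 1 ≤ T.μ w[i] (f i) (f (i + 1))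

/-- Position `j` of `w` is where some run from `p` to `q` leaves the strongly connected
component of `p`. -/
def IsExit (p q : T.Q) (w : List A) (j : Fin w.length) : Prop :=
  ∃ r s, T.SameSCC p r ∧ ¬ T.SameSCC p s ∧ 1 ≤ T.μW (w.take j) p r ∧ 1 ≤ T.μ w[j] r s ∧
    1 ≤ T.μW (w.drop (j + 1)) s q

open Classical in
noncomputable def exits (p q : T.Q) (w : List A) : Finset (Fin w.length) :=
  Finset.univ.filter (T.IsExit p q w)

variable {T}

open Finset

lemma one_le_μW_append {u v : List A} {p q r : T.Q} (hu : 1 ≤ T.μW u p q)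
    (hv : 1 ≤ T.μW v q r) : 1 ≤ T.μW (u ++ v) p r :=
  (Nat.mul_le_mul hu hv).trans (T.mul_le_μW_append u v p q r)

lemma Reach.trans {p q r : T.Q} : T.Reach p q → T.Reach q r → T.Reach p r
  | ⟨u, hu⟩, ⟨v, hv⟩ => ⟨u ++ v, one_le_μW_append hu hv⟩

lemma reach_of_one_le_μ {a : A} {p q : T.Q} (h : 1 ≤ T.μ a p q) : T.Reach p q :=
  ⟨[a], by rwa [μW_singleton]⟩

lemma μW_le_one_of_sameSCC (hH : ¬ ∃ q v, T.HeavyCycle q v) {p q : T.Q}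
    (h : T.SameSCC p q) (w : List A) : T.μW w p q ≤ 1 := by
  by_contra! hw
  obtain ⟨u, hu⟩ := h.2
  have hw_ne : w ≠ [] := by
    rintro rfl
    simp only [μW_nil, matId] at hw
    split at hw <;> omega
  exact hH ⟨p, w ++ u, by simp [hw_ne],
    (Nat.mul_le_mul hw hu).trans (T.mul_le_μW_append w u p q p)⟩

lemma IsRun.one_le_μW_drop_take {w : List A} {f : ℕ → T.Q} (hf : T.IsRun w f) {a b : ℕ}
    (hab : a ≤ b) (hb : b ≤ w.length) :
    1 ≤ T.μW ((w.drop a).take (b - a)) (f a) (f b) := by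
  obtain ⟨k, rfl⟩ := Nat.exists_eq_add_of_le hab
  induction k generalizing a with
  | zero => simp [matId]
  | succ k ih =>
    have ha : a < w.length := by omega
    rw [List.drop_eq_getElem_cons ha, Nat.add_sub_cancel_left, List.take_succ_cons, μW_cons]
    have hrest := ih (a := a + 1) (by omega) (by omega)
    rw [Nat.add_sub_cancel_left, show a + 1 + k = a + (k + 1) by omega] at hrest
    exact (Nat.mul_le_mul (hf a ha) hrest).trans (mul_le_matMul _ _ _ _ _)

lemma IsRun.reach {w : List A} {f : ℕ → T.Q} (hf : T.IsRun w f) {a b : ℕ} (hab : a ≤ b)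
    (hb : b ≤ w.length) : T.Reach (f a) (f b) :=
  ⟨_, hf.one_le_μW_drop_take hab hb⟩

lemma exists_isRun_of_one_le_μW {w : List A} {p q : T.Q} (h : 1 ≤ T.μW w p q) :
    ∃ f : ℕ → T.Q, T.IsRun w f ∧ f 0 = p ∧ f w.length = q := by
  induction w generalizing p with
  | nil =>
    have hpq : p = q := by by_contra hpq; simp [matId, hpq] at h
    exact ⟨fun _ => p, fun i hi => absurd hi (Nat.not_lt_zero i), rfl, hpq⟩
  | cons a w ih =>
    obtain ⟨s, -, hs⟩ := Finset.exists_ne_zero_of_sum_ne_zero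
      (Nat.one_le_iff_ne_zero.mp (by simpa [μW_cons, matMul] using h))
    obtain ⟨hps, hsq⟩ := Nat.mul_ne_zero_iff.mp hs
    obtain ⟨f, hf, hf0, hfq⟩ := ih (Nat.one_le_iff_ne_zero.mpr hsq)
    refine ⟨fun t => if t = 0 then p else f (t - 1), ?_, rfl, by simpa using hfq⟩
    rintro (_ | i) hi
    · simpa [hf0] using Nat.one_le_iff_ne_zero.mpr hps
    · simpa using hf i (by simpa using hi)

lemma exists_isRun_through {w : List A} {j : ℕ} (hj : j < w.length) {p q r s : T.Q}
    (hpr : 1 ≤ T.μW (w.take j) p r) (hrs : 1 ≤ T.μ w[j] r s)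
    (hsq : 1 ≤ T.μW (w.drop (j + 1)) s q) :
    ∃ σ : ℕ → T.Q, T.IsRun w σ ∧ σ 0 = p ∧ σ j = r ∧ σ (j + 1) = s := by
  obtain ⟨f, hf, hf0, hfr⟩ := exists_isRun_of_one_le_μW hpr
  obtain ⟨g, hg, hgs, -⟩ := exists_isRun_of_one_le_μW hsq
  rw [List.length_take_of_le hj.le] at hfr
  refine ⟨fun t => if t ≤ j then f t else g (t - (j + 1)), ?_, by simp [hf0], by simp [hfr],
    by simp [hgs]⟩
  intro i hi
  rcases lt_trichotomy i j with hij | rfl | hij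
  · have := hf i (by simp [hij, hi])
    simpa [hij.le, Nat.succ_le_of_lt hij] using this
  · simpa [hfr, hgs] using hrs
  · obtain ⟨k, rfl⟩ := Nat.exists_eq_add_of_lt hij
    have := hg k (by simp; omega)
    simp only [List.getElem_drop] at this
    simp only [if_neg (show ¬ j + k + 1 ≤ j by omega), if_neg (show ¬ j + k + 1 + 1 ≤ j by omega),
      show j + k + 1 - (j + 1) = k by omega, show j + k + 1 + 1 - (j + 1) = k + 1 by omega]
    convert this using 3
    omega

lemma sum_mul_μW_cons_le (S : Finset T.Q) (u : List A) (a : A) (v : List A) (p q : T.Q) :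
    ∑ r ∈ S, T.μW u p r * T.μW (a :: v) r q ≤
      ∑ s ∈ S, T.μW (u ++ [a]) p s * T.μW v s q +
        ∑ r ∈ S, ∑ s ∈ Sᶜ, T.μW u p r * T.μ a r s * T.μW v s q := by
  have hsplit : ∑ r ∈ S, T.μW u p r * T.μW (a :: v) r q =
      ∑ s ∈ S, ∑ r ∈ S, T.μW u p r * T.μ a r s * T.μW v s q +
        ∑ r ∈ S, ∑ s ∈ Sᶜ, T.μW u p r * T.μ a r s * T.μW v s q := by
    simp only [μW_cons, matMul, ← sum_add_sum_compl S, mul_add, sum_add_distrib, mul_sum, mul_assoc]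
    rw [sum_comm]
  rw [hsplit]
  gcongr with s
  rw [← sum_mul, μW_append, matMul]
  simp only [μW_singleton]
  exact Nat.mul_le_mul_right _ (sum_le_sum_of_subset (subset_univ S))

/-- Every run from `p ∈ S` to `q ∉ S` leaves `S` at some position `j`, stepping from
`r ∈ S` to `s ∉ S`. -/
lemma μW_le_sum_cut (S : Finset T.Q) {p q : T.Q} (hp : p ∈ S) (hq : q ∉ S) (w : List A) :
    T.μW w p q ≤ ∑ j : Fin w.length, ∑ r ∈ S, ∑ s ∈ Sᶜ,
      T.μW (w.take j) p r * T.μ w[j] r s * T.μW (w.drop (j + 1)) s q := by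
  set Φ : ℕ → ℕ := fun j => ∑ r ∈ S, T.μW (w.take j) p r * T.μW (w.drop j) r q
  set X : ℕ → ℕ := fun j => if h : j < w.length then ∑ r ∈ S, ∑ s ∈ Sᶜ,
    T.μW (w.take j) p r * T.μ w[j] r s * T.μW (w.drop (j + 1)) s q else 0
  have hΦ0 : Φ 0 = T.μW w p q := by simp [Φ, matId, ite_mul, hp]
  have hΦlen : Φ w.length = 0 :=
    sum_eq_zero fun r hr => by simp [matId, show r ≠ q by rintro rfl; exact hq hr]
  have hstep : ∀ j < w.length, Φ j ≤ Φ (j + 1) + X j := fun j hj => by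
    simpa only [Φ, X, dif_pos hj, List.drop_eq_getElem_cons hj,
      List.take_succ_eq_append_getElem hj] using sum_mul_μW_cons_le S _ w[j] _ p q
  have := Nat.le_add_sum_range_of_le_succ_add hstep
  rw [hΦ0, hΦlen, zero_add, sum_range] at this
  simpa [X] using this

lemma mem_exits {p q : T.Q} {w : List A} {j : Fin w.length} :
    j ∈ T.exits p q w ↔ T.IsExit p q w j := by
  simp [exits]

lemma IsExit.exists_run {p q : T.Q} {w : List A} {j : Fin w.length} (h : T.IsExit p q w j) :
    ∃ σ : ℕ → T.Q, T.IsRun w σ ∧ (∀ t ≤ (j : ℕ), T.SameSCC p (σ t)) ∧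
      ∀ t, (j : ℕ) < t → t ≤ w.length → ¬ T.SameSCC p (σ t) := by
  obtain ⟨r, s, hr, hs, hpr, hrs, hsq⟩ := h
  obtain ⟨σ, hσ, hσp, hσr, hσs⟩ := exists_isRun_through j.isLt hpr hrs hsq
  refine ⟨σ, hσ, fun t ht => ⟨?_, ?_⟩, fun t ht htw hpt => hs ⟨?_, ?_⟩⟩
  · exact hσp ▸ hσ.reach (Nat.zero_le t) (ht.trans j.isLt.le)
  · exact (hσr ▸ hσ.reach ht j.isLt.le).trans hr.2
  · exact hr.1.trans (reach_of_one_le_μ hrs)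
  · exact (hσs ▸ hσ.reach ht htw).trans hpt.2

lemma barbell_append_self {e r d : T.Q} {u : List A} (hu : u ≠ []) (hed : e ≠ d)
    (hee : 1 ≤ T.μW u e e) (her : 1 ≤ T.μW u e r) (hrd : 1 ≤ T.μW u r d)
    (hdd : 1 ≤ T.μW u d d) : T.Barbell e d (u ++ u) :=
  ⟨hed, by simp [hu], one_le_μW_append hee hee, one_le_μW_append her hrd,
    one_le_μW_append hdd hdd⟩

/-- Colour a pair of exit positions `x < y` by the state of the run exiting at `y` at time `x`
and the states of the run exiting at `x` at times `y` and `x`. Four exits `k₀ < k₁ < k₂ < k₃`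
of one colour `(e, d, r)` give, on the segment `[k₁, k₂]`, a loop `e → e` (run `k₃`), steps
`e → r` (run `k₂`) and `r → d` (run `k₁`), and a loop `d → d` (run `k₀`). -/
lemma card_exits_lt (hB : ¬ ∃ q q' v, T.Barbell q q' v) (p q : T.Q) (w : List A) :
    #(T.exits p q w) <
      (Fintype.card (T.Q × T.Q × T.Q) + 1) ^ (3 * Fintype.card (T.Q × T.Q × T.Q) + 1) := by
  by_contra! hcard
  have : Nonempty T.Q := ⟨p⟩
  choose! σ hσ using fun j (hj : j ∈ T.exits p q w) => (mem_exits.mp hj).exists_run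
  obtain ⟨M, hME, hM, ⟨e, d, r⟩, hκ⟩ := exists_subset_monochromatic
    (fun x y : Fin w.length => (σ y x, σ x y, σ x x)) 3 _ hcard
  set k := M.orderEmbOfFin hM
  have hkM (i : Fin 4) : k i ∈ M := M.orderEmbOfFin_mem hM i
  have hk (i : Fin 4) := hσ _ (hME (hkM i))
  have hcol (i j : Fin 4) (hij : i < j) := hκ _ (hkM i) _ (hkM j) (k.strictMono hij)
  have h01 := hcol 0 1 (by decide)
  have h02 := hcol 0 2 (by decide)
  have h12 := hcol 1 2 (by decide)
  have h13 := hcol 1 3 (by decide)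
  have h23 := hcol 2 3 (by decide)
  simp only [Prod.mk.injEq] at h01 h02 h12 h13 h23
  have hk12 : (k 1 : ℕ) < k 2 := k.strictMono (by decide : (1 : Fin 4) < 2)
  set u := (w.drop (k 1)).take (k 2 - k 1)
  have hseg (i : Fin 4) : 1 ≤ T.μW u (σ (k i) (k 1)) (σ (k i) (k 2)) :=
    (hk i).1.one_le_μW_drop_take hk12.le (k 2).isLt.le
  have hu : u ≠ [] := by
    rw [← List.length_pos_iff, List.length_take, List.length_drop]
    have := (k 2).isLt
    omega
  have he : T.SameSCC p e :=
    h13.1 ▸ (hk 3).2.1 _ (k.strictMono (by decide : (1 : Fin 4) < 3)).le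
  have hd : ¬ T.SameSCC p d :=
    h01.2.1 ▸ (hk 0).2.2 _ (k.strictMono (by decide : (0 : Fin 4) < 1)) (k 1).isLt.le
  refine hB ⟨e, d, u ++ u, barbell_append_self (r := r) hu (fun h => hd (h ▸ he)) ?_ ?_ ?_ ?_⟩
  · simpa only [h13.1, h23.1] using hseg 3
  · simpa only [h12.1, h23.2.2] using hseg 2
  · simpa only [h12.2.2, h12.2.1] using hseg 1
  · simpa only [h01.2.1, h02.2.1] using hseg 0

lemma μW_le_card_exits_mul (hH : ¬ ∃ q v, T.HeavyCycle q v) {p q : T.Q}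
    (hpq : ¬ T.SameSCC p q) {K B : ℕ} (hK : ∀ a r s, T.μ a r s ≤ K)
    (hB : ∀ s, T.Reach p s → ¬ T.SameSCC p s → ∀ v, T.μW v s q ≤ B) (w : List A) :
    T.μW w p q ≤
      #(T.exits p q w) * (Fintype.card T.Q * Fintype.card T.Q * (K * B)) := by
  classical
  set S := univ.filter (T.SameSCC p)
  have hterm : ∀ j : Fin w.length, ∀ r ∈ S, ∀ s ∈ Sᶜ,
      T.μW (w.take j) p r * T.μ w[j] r s * T.μW (w.drop (j + 1)) s q ≤
        if j ∈ T.exits p q w then K * B else 0 := by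
    intro j r hr s hs
    simp only [S, mem_compl, mem_filter, mem_univ, true_and] at hr hs
    by_cases hpos : 1 ≤ T.μW (w.take j) p r ∧ 1 ≤ T.μ w[j] r s ∧
        1 ≤ T.μW (w.drop (j + 1)) s q
    · obtain ⟨hpr, hrs, hsq⟩ := hpos
      rw [if_pos (mem_exits.mpr ⟨r, s, hr, hs, hpr, hrs, hsq⟩), ← one_mul (K * B), ← mul_assoc]
      have hps : T.Reach p s := Reach.trans ⟨_, hpr⟩ (reach_of_one_le_μ hrs)
      exact Nat.mul_le_mul (Nat.mul_le_mul (μW_le_one_of_sameSCC hH hr _) (hK _ _ _))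
        (hB s hps hs _)
    · simp only [not_and_or, not_le, Nat.lt_one_iff] at hpos
      rcases hpos with h | h | h <;> simp only [Fin.getElem_fin] at h ⊢ <;> simp [h]
  calc T.μW w p q
      ≤ ∑ j : Fin w.length, ∑ r ∈ S, ∑ s ∈ Sᶜ,
          T.μW (w.take j) p r * T.μ w[j] r s * T.μW (w.drop (j + 1)) s q :=
        μW_le_sum_cut S (by simp [S, T.sameSCC_refl]) (by simpa [S] using hpq) w
    _ ≤ ∑ j : Fin w.length, ∑ _r : T.Q, ∑ _s : T.Q,
          if j ∈ T.exits p q w then K * B else 0 := by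
        gcongr with j
        refine (sum_le_sum_of_subset (subset_univ S)).trans' (sum_le_sum fun r hr => ?_)
        exact (sum_le_sum_of_subset (subset_univ Sᶜ)).trans' (sum_le_sum (hterm j r hr))
    _ = #(T.exits p q w) * (Fintype.card T.Q * Fintype.card T.Q * (K * B)) := by
        simp only [sum_const, card_univ, smul_eq_mul, ← mul_sum, sum_ite_mem, univ_inter]
        ring

lemma card_reach_lt [DecidableRel T.Reach] {p s : T.Q} (hps : T.Reach p s)
    (hsp : ¬ T.Reach s p) : #(univ.filter (T.Reach s)) < #(univ.filter (T.Reach p)) := by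
  refine card_lt_card ((ssubset_iff_of_subset fun t ht => ?_).mpr ⟨p, ?_, ?_⟩)
  · simp only [mem_filter, mem_univ, true_and] at ht ⊢
    exact hps.trans ht
  · simpa using T.reach_refl p
  · simpa using hsp

lemma exists_μW_le [Fintype A] (hH : ¬ ∃ q v, T.HeavyCycle q v)
    (hB : ¬ ∃ q q' v, T.Barbell q q' v) : ∃ B, ∀ w p q, T.μW w p q ≤ B := by
  classical
  obtain ⟨K, hK⟩ := Finite.exists_le fun x : A × T.Q × T.Q => T.μ x.1 x.2.1 x.2.2
  set n := Fintype.card T.Q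
  set R := (Fintype.card (T.Q × T.Q × T.Q) + 1) ^ (3 * Fintype.card (T.Q × T.Q × T.Q) + 1)
  suffices ∀ m, ∃ B, ∀ p, #(univ.filter (T.Reach p)) ≤ m → ∀ w q, T.μW w p q ≤ B by
    obtain ⟨B, hB⟩ := this n
    exact ⟨B, fun w p q => hB p (card_le_univ _) w q⟩
  intro m
  induction m with
  | zero => exact ⟨0, fun p hp => absurd hp (by simpa using ⟨p, T.reach_refl p⟩)⟩
  | succ m ih =>
    obtain ⟨B, hB_reach⟩ := ih
    refine ⟨R * (n * n * (K * B)) + 1, fun p hp w q => ?_⟩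
    by_cases hpq : T.SameSCC p q
    · exact (μW_le_one_of_sameSCC hH hpq w).trans (Nat.le_add_left 1 _)
    have hsuffix : ∀ s, T.Reach p s → ¬ T.SameSCC p s → ∀ v, T.μW v s q ≤ B :=
      fun s hps hs v => hB_reach s
        (Nat.lt_succ_iff.mp ((card_reach_lt hps (hs ⟨hps, ·⟩)).trans_le hp)) v q
    calc T.μW w p q ≤ #(T.exits p q w) * (n * n * (K * B)) :=
          μW_le_card_exits_mul hH hpq (fun a r s => hK (a, r, s)) hsuffix w
      _ ≤ R * (n * n * (K * B)) := Nat.mul_le_mul_right _ (card_exits_lt hB p q w).le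
      _ ≤ _ := Nat.le_succ _

lemma g_eq_sum (w : List A) : T.g w = ∑ i, ∑ j, T.α i * T.μW w i j * T.β j := by
  simp only [NAut.g, dotProd, vecMat, sum_mul]
  exact sum_comm

lemma g_le_of_μW_le {B : ℕ} (hB : ∀ w p q, T.μW w p q ≤ B) (w : List A) :
    T.g w ≤ (∑ i, T.α i) * B * ∑ j, T.β j := by
  rw [g_eq_sum, sum_mul, sum_mul_sum]
  gcongr with i _ j _
  exact hB w i j

lemma μW_le_of_g_le (hT : T.Trim) {C : ℕ} (hC : ∀ w, T.g w ≤ C) (x : List A) (p q : T.Q) :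
    T.μW x p q ≤ C := by
  obtain ⟨⟨u, hu⟩, -⟩ := hT p
  obtain ⟨-, ⟨v, hv⟩⟩ := hT q
  calc T.μW x p q = 1 * T.μW x p q * 1 := by ring
    _ ≤ vecMat T.α (T.μW u) p * T.μW x p q * matVec (T.μW v) T.β q := by gcongr
    _ = ∑ i, ∑ j, T.α i * (T.μW u i p * T.μW x p q * T.μW v q j) * T.β j := by
        simp only [vecMat, matVec]
        rw [sum_mul, sum_mul_sum]
        refine sum_congr rfl fun i _ => sum_congr rfl fun j _ => by ring
    _ ≤ ∑ i, ∑ j, T.α i * T.μW (u ++ x ++ v) i j * T.β j := by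
        gcongr with i _ j _
        exact (Nat.mul_le_mul_right _ (T.mul_le_μW_append u x i p q)).trans
          (T.mul_le_μW_append _ v i q j)
    _ = T.g (u ++ x ++ v) := (g_eq_sum _).symm
    _ ≤ C := hC _

lemma one_le_μW_flatten_replicate {v : List A} {q : T.Q} (h : 1 ≤ T.μW v q q) (n : ℕ) :
    1 ≤ T.μW (List.replicate n v).flatten q q := by
  induction n with
  | zero => simp [matId]
  | succ n ih => exact one_le_μW_append h ih

lemma HeavyCycle.two_pow_le {q : T.Q} {v : List A} (h : T.HeavyCycle q v) (n : ℕ) :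
    2 ^ n ≤ T.μW (List.replicate n v).flatten q q := by
  induction n with
  | zero => simp [matId]
  | succ n ih => exact (pow_succ' 2 n ▸ Nat.mul_le_mul h.2 ih).trans (T.mul_le_μW_append _ _ _ _ _)

lemma Barbell.le_μW {q q' : T.Q} {v : List A} (h : T.Barbell q q' v) (n : ℕ) :
    n ≤ T.μW (List.replicate n v).flatten q q' := by
  obtain ⟨hne, -, hq, hqq', hq'⟩ := h
  induction n with
  | zero => exact Nat.zero_le _
  | succ n ih =>
    calc n + 1 = 1 * n + 1 * 1 := by ring
      _ ≤ T.μW v q q * T.μW (List.replicate n v).flatten q q' +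
          T.μW v q q' * T.μW (List.replicate n v).flatten q' q' :=
        add_le_add (Nat.mul_le_mul hq ih) (Nat.mul_le_mul hqq' (one_le_μW_flatten_replicate hq' n))
      _ ≤ T.μW (List.replicate (n + 1) v).flatten q q' := by
        rw [List.replicate_succ, List.flatten_cons, μW_append]
        exact add_mul_le_matMul hne _ _ _ _

end NAut

theorem stmt8 {A : Type} [Fintype A] (T : NAut A) (hT : T.Trim) :
    (∃ C : ℕ, ∀ w, T.g w ≤ C) ↔
      ((¬ ∃ q v, T.HeavyCycle q v) ∧ ¬ ∃ q q' v, T.Barbell q q' v) := by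
  constructor
  · rintro ⟨C, hC⟩
    have hμ := NAut.μW_le_of_g_le hT hC
    refine ⟨fun ⟨q, v, hv⟩ => ?_, fun ⟨q, q', v, hv⟩ => ?_⟩
    · exact (Nat.lt_two_pow_self.trans_le ((hv.two_pow_le C).trans (hμ _ q q))).false
    · exact (Nat.lt_succ_self C).not_ge ((hv.le_μW (C + 1)).trans (hμ _ q q'))
  · rintro ⟨hH, hB⟩
    obtain ⟨B, hμ⟩ := NAut.exists_μW_le hH hB
    exact ⟨_, NAut.g_le_of_μW_le hμ⟩
end
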